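/- Let (X_t)_{t∈ℕ^d} be an integrable real-valued random field on a probability space (Ω,𝓕,ℙ), let A ⊂ ℕ^d be a finite set and k ∈ ℕ a fixed integer. Then the family (Z_{b,k}(A), 𝓕_k(b))_{b ∈ π_k(A)}, indexed by π_k(A) := {π_k(t) : t ∈ A} ordered by the total order ≼, is a martingale difference sequence: for each b ∈ π_k(A), Z_{b,k}(A) is 𝓕_k(b)-measurable and integrable, the σ-algebras 𝓕_k(b) are nondecreasing in b along ≼, and E[Z_{b,k}(A) | 𝓕_k(b')] = 0 for every b' ∈ π_k(A) with b' ≺ b. -/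

import Mathlib

open MeasureTheory Finset
open scoped ENNReal

noncomputable section

/-- Dyadic projection at scale `k`: `π_k(t)_i = ⌊t_i / 2^k⌋ · 2^k`. -/
def proj {d : ℕ} (k : ℕ) (t : Fin d → ℕ) : Fin d → ℕ :=
  fun i => t i / 2 ^ k * 2 ^ k

/-- Strict lexicographical order on `ℕ^d`. -/
def lexLT {d : ℕ} (t t' : Fin d → ℕ) : Prop :=
  ∃ i, (∀ j, j < i → t j = t' j) ∧ t i < t' i

/-- `κ(t,t') + 1 = min{k : π_k(t) = π_k(t')}`. -/
def kappaSucc {d : ℕ} (t t' : Fin d → ℕ) : ℕ :=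
  sInf {k | proj k t = proj k t'}

/-- The total order `≼` on `ℕ^d`: `t ≼ t'` iff `t = t'` or
`π_{κ(t,t')}(t) <_lex π_{κ(t,t')}(t')` where `κ(t,t') = min{k : π_k(t) = π_k(t')} − 1`. -/
def dyadicLE {d : ℕ} (t t' : Fin d → ℕ) : Prop :=
  t = t' ∨ lexLT (proj (kappaSucc t t' - 1) t) (proj (kappaSucc t t' - 1) t')

/-- The strict order `≺` associated to `≼`. -/
def dyadicLT {d : ℕ} (t t' : Fin d → ℕ) : Prop :=
  dyadicLE t t' ∧ t ≠ t'

/-- `Π_k^≺(t) = {t' : π_k(t') ≺ π_k(t)}`. -/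
def PiPrec {d : ℕ} (k : ℕ) (t : Fin d → ℕ) : Set (Fin d → ℕ) :=
  {t' | dyadicLT (proj k t') (proj k t)}

/-- `Π_k(t) = {t' : π_k(t') ≼ π_k(t)}`. -/
def PiLE {d : ℕ} (k : ℕ) (t : Fin d → ℕ) : Set (Fin d → ℕ) :=
  {t' | dyadicLE (proj k t') (proj k t)}

/-- The dyadic cell `C_{k,b} = {b} + {0,…,2^k−1}^d`. -/
def cell {d : ℕ} (k : ℕ) (b : Fin d → ℕ) : Set (Fin d → ℕ) :=
  {t | ∀ i, b i ≤ t i ∧ t i < b i + 2 ^ k}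

/-- `𝓕_k^≺(t) = σ(X_{t'} : t' ∈ Π_k^≺(t))` (the trivial σ-algebra if the set is empty). -/
def Fprec {Ω : Type*} {d : ℕ} (X : (Fin d → ℕ) → Ω → ℝ) (k : ℕ) (t : Fin d → ℕ) :
    MeasurableSpace Ω :=
  ⨆ t' ∈ PiPrec k t, MeasurableSpace.comap (X t') Real.measurableSpace

/-- `𝓕_k(t) = σ(X_{t'} : t' ∈ Π_k(t))`. -/
def Fle {Ω : Type*} {d : ℕ} (X : (Fin d → ℕ) → Ω → ℝ) (k : ℕ) (t : Fin d → ℕ) :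
    MeasurableSpace Ω :=
  ⨆ t' ∈ PiLE k t, MeasurableSpace.comap (X t') Real.measurableSpace

/-- The martingale increments: `Z_{t,0}(A) = X_t − E[X_t | 𝓕_0^≺(t)]`, and for `k ≥ 1`,
`Z_{b,k}(A) = Σ_{t ∈ C_{k,b} ∩ A} (E[X_t | 𝓕_k^≺(t)] − E[X_t | 𝓕_{k−1}^≺(t)])`. -/
def Zmart {Ω : Type*} [MeasurableSpace Ω] (μ : Measure Ω) {d : ℕ}
    (X : (Fin d → ℕ) → Ω → ℝ) (A : Finset (Fin d → ℕ)) (k : ℕ) (b : Fin d → ℕ) : Ω → ℝ :=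
  if k = 0 then X b - μ[X b | Fprec X 0 b]
  else fun ω => ∑ t ∈ A.filter (fun t => ∀ i, b i ≤ t i ∧ t i < b i + 2 ^ k),
    ((μ[X t | Fprec X k t]) ω - (μ[X t | Fprec X (k - 1) t]) ω)

/-! The strict order `≺` has a local description: `t ≺ t'` iff at some scale `m` the dyadic
projections agree at scale `m + 1` and compare lexicographically at scale `m`. This makes `≺`
transitive and compatible with coarsening the scale, which yields the inclusions
`𝓕_k(b') ⊆ 𝓕_j^≺(t) ⊆ 𝓕_k(b)` for `j ∈ {k − 1, k}`, `t ∈ C_{k,b}` and `b' ≺ b`. Every summand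
of `Z_{b,k}(A)` is a difference of two conditional expectations of `X_t` with respect to
σ-algebras squeezed in this way (for `k = 0`, read `X_b` as `E[X_b | 𝓕]`), so it is
`𝓕_k(b)`-measurable, and by the tower property its conditional expectation given `𝓕_k(b')` is
`E[X_t | 𝓕_k(b')] − E[X_t | 𝓕_k(b')] = 0`. -/

section DyadicOrder

variable {d : ℕ} {j k m : ℕ} {s t t' t'' b : Fin d → ℕ}

lemma proj_zero (t : Fin d → ℕ) : proj 0 t = t := by
  funext i; simp [proj]

lemma proj_proj_of_le (h : m ≤ k) (t : Fin d → ℕ) : proj m (proj k t) = proj k t := by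
  funext i
  exact Nat.div_mul_cancel ((pow_dvd_pow 2 h).mul_left _)

lemma proj_proj_of_ge (h : k ≤ m) (t : Fin d → ℕ) : proj m (proj k t) = proj m t := by
  funext i
  show t i / 2 ^ k * 2 ^ k / 2 ^ m * 2 ^ m = t i / 2 ^ m * 2 ^ m
  rw [← Nat.add_sub_cancel' h, pow_add, ← Nat.div_div_eq_div_mul, ← Nat.div_div_eq_div_mul,
    Nat.mul_div_cancel _ (by positivity)]

lemma proj_eq_of_le (h : k ≤ m) (he : proj k t = proj k t') : proj m t = proj m t' := by
  rw [← proj_proj_of_ge h t, ← proj_proj_of_ge h t', he]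

lemma proj_eq_zero (h : ∀ i, t i < 2 ^ m) : proj m t = 0 :=
  funext fun i => by simp [proj, Nat.div_eq_of_lt (h i)]

lemma exists_proj_eq (t t' : Fin d → ℕ) : ∃ m, proj m t = proj m t' := by
  have hlt : ∀ i, t i + t' i < 2 ^ ∑ i, (t i + t' i) := fun i =>
    (single_le_sum (f := fun i => t i + t' i) (fun _ _ => Nat.zero_le _) (mem_univ i)).trans_lt
      Nat.lt_two_pow_self
  exact ⟨_, (proj_eq_zero fun i => (Nat.le_add_right _ _).trans_lt (hlt i)).trans
    (proj_eq_zero fun i => (Nat.le_add_left _ _).trans_lt (hlt i)).symm⟩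

lemma proj_eq_iff_kappaSucc_le : proj m t = proj m t' ↔ kappaSucc t t' ≤ m :=
  ⟨fun h => Nat.sInf_le h, fun h => proj_eq_of_le h (Nat.sInf_mem (exists_proj_eq t t'))⟩

lemma proj_eq_of_mem_cell (hb : proj k b = b) (ht : t ∈ cell k b) : proj k t = b := by
  funext i
  have hbi : b i / 2 ^ k * 2 ^ k = b i := congrFun hb i
  show t i / 2 ^ k * 2 ^ k = b i
  rw [Nat.div_eq_of_lt_le (by rw [hbi]; exact (ht i).1)
    (by rw [Nat.succ_mul, hbi]; exact (ht i).2), hbi]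

lemma lexLT_irrefl (t : Fin d → ℕ) : ¬ lexLT t t :=
  fun ⟨_, _, hi⟩ => lt_irrefl _ hi

lemma lexLT_trans (h₁ : lexLT t t') (h₂ : lexLT t' t'') : lexLT t t'' := by
  obtain ⟨i, hi, hti⟩ := h₁
  obtain ⟨j, hj, htj⟩ := h₂
  rcases lt_trichotomy i j with hij | rfl | hij
  · exact ⟨i, fun l hl => (hi l hl).trans (hj l (hl.trans hij)), hj i hij ▸ hti⟩
  · exact ⟨i, fun l hl => (hi l hl).trans (hj l hl), hti.trans htj⟩
  · exact ⟨j, fun l hl => (hi l (hl.trans hij)).trans (hj l hl), (hi j hij).symm ▸ htj⟩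

lemma dyadicLE_iff_eq_or_lt : dyadicLE t t' ↔ t = t' ∨ dyadicLT t t' :=
  ⟨fun h => (eq_or_ne t t').imp_right fun hne => ⟨h, hne⟩, fun h => h.elim Or.inl And.left⟩

lemma dyadicLT_iff :
    dyadicLT t t' ↔ ∃ m, proj (m + 1) t = proj (m + 1) t' ∧ lexLT (proj m t) (proj m t') := by
  constructor
  · rintro ⟨h | h, hne⟩
    · exact absurd h hne
    have hpos : kappaSucc t t' ≠ 0 := fun h0 =>
      hne (by simpa [proj_zero] using proj_eq_iff_kappaSucc_le.2 h0.le)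
    exact ⟨kappaSucc t t' - 1, proj_eq_iff_kappaSucc_le.2 (by omega), h⟩
  · rintro ⟨m, he, hl⟩
    have hne : proj m t ≠ proj m t' := fun h => lexLT_irrefl _ (h ▸ hl)
    have hκ : kappaSucc t t' = m + 1 := by
      have h₁ := proj_eq_iff_kappaSucc_le.1 he
      have h₂ := mt (proj_eq_iff_kappaSucc_le (m := m)).2 hne
      omega
    exact ⟨Or.inr (by rwa [hκ, Nat.add_sub_cancel]), fun h => hne (by rw [h])⟩

lemma dyadicLT_proj_iff : dyadicLT (proj j s) (proj j t) ↔
    ∃ m, j ≤ m ∧ proj (m + 1) s = proj (m + 1) t ∧ lexLT (proj m s) (proj m t) := by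
  rw [dyadicLT_iff]
  constructor
  · rintro ⟨m, he, hl⟩
    have hjm : j ≤ m := by
      by_contra! hmj
      rw [proj_proj_of_le (show m + 1 ≤ j by omega), proj_proj_of_le (show m + 1 ≤ j by omega)]
        at he
      rw [he] at hl
      exact lexLT_irrefl _ hl
    rw [proj_proj_of_ge (show j ≤ m + 1 by omega), proj_proj_of_ge (show j ≤ m + 1 by omega)]
      at he
    rw [proj_proj_of_ge hjm, proj_proj_of_ge hjm] at hl
    exact ⟨m, hjm, he, hl⟩
  · rintro ⟨m, hjm, he, hl⟩
    refine ⟨m, ?_, ?_⟩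
    · rwa [proj_proj_of_ge (by omega), proj_proj_of_ge (by omega)]
    · rwa [proj_proj_of_ge hjm, proj_proj_of_ge hjm]

lemma dyadicLT_trans (h₁ : dyadicLT t t') (h₂ : dyadicLT t' t'') : dyadicLT t t'' := by
  obtain ⟨m₁, he₁, hl₁⟩ := dyadicLT_iff.1 h₁
  obtain ⟨m₂, he₂, hl₂⟩ := dyadicLT_iff.1 h₂
  refine dyadicLT_iff.2 ⟨max m₁ m₂,
    (proj_eq_of_le (by omega) he₁).trans (proj_eq_of_le (by omega) he₂), ?_⟩
  rcases lt_trichotomy m₁ m₂ with h | rfl | h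
  · rwa [max_eq_right h.le, proj_eq_of_le h he₁]
  · simpa using lexLT_trans hl₁ hl₂
  · rwa [max_eq_left h.le, ← proj_eq_of_le h he₂]

lemma dyadicLE_trans (h₁ : dyadicLE t t') (h₂ : dyadicLE t' t'') : dyadicLE t t'' := by
  rw [dyadicLE_iff_eq_or_lt] at *
  rcases h₁ with rfl | h₁
  · exact h₂
  rcases h₂ with rfl | h₂
  · exact Or.inr h₁
  · exact Or.inr (dyadicLT_trans h₁ h₂)

lemma dyadicLT_of_le_of_lt (h₁ : dyadicLE t t') (h₂ : dyadicLT t' t'') : dyadicLT t t'' := by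
  rcases dyadicLE_iff_eq_or_lt.1 h₁ with rfl | h₁
  exacts [h₂, dyadicLT_trans h₁ h₂]

lemma dyadicLT_proj_of_le (hjk : j ≤ k) (h : dyadicLT (proj k s) (proj k t)) :
    dyadicLT (proj j s) (proj j t) := by
  obtain ⟨m, hkm, hm⟩ := dyadicLT_proj_iff.1 h
  exact dyadicLT_proj_iff.2 ⟨m, hjk.trans hkm, hm⟩

lemma dyadicLE_proj_of_lt_proj (h : dyadicLT (proj j s) (proj j t)) :
    dyadicLE (proj k s) (proj k t) := by
  obtain ⟨m, hjm, he, hl⟩ := dyadicLT_proj_iff.1 h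
  rcases le_or_gt k m with hkm | hmk
  · exact (dyadicLT_proj_iff.2 ⟨m, hkm, he, hl⟩).1
  · exact Or.inl (proj_eq_of_le hmk he)

end DyadicOrder

section Filtration

variable {Ω : Type*} {d : ℕ} (X : (Fin d → ℕ) → Ω → ℝ) {j k : ℕ} {b b' t : Fin d → ℕ}

lemma Fle_mono (h : dyadicLE (proj k b') (proj k b)) : Fle X k b' ≤ Fle X k b :=
  biSup_mono fun _ hs => dyadicLE_trans hs h

lemma Fprec_le_Fle (h : proj k t = proj k b) : Fprec X j t ≤ Fle X k b :=
  biSup_mono fun s hs => by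
    change dyadicLE (proj k s) (proj k b)
    rw [← h]
    exact dyadicLE_proj_of_lt_proj hs

lemma Fle_le_Fprec (hjk : j ≤ k) (h : dyadicLT (proj k b') (proj k t)) :
    Fle X k b' ≤ Fprec X j t :=
  biSup_mono fun _ hs => dyadicLT_proj_of_le hjk (dyadicLT_of_le_of_lt hs h)

lemma Fprec_le [mΩ : MeasurableSpace Ω] (hX : ∀ t, Measurable (X t)) : Fprec X k t ≤ mΩ :=
  iSup₂_le fun s _ => (hX s).comap_le

lemma measurable_Fle_self : Measurable[Fle X k b] (X b) :=
  Measurable.of_comap_le (le_iSup₂_of_le b (Or.inl rfl) le_rfl)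

end Filtration

section ConditionalExpectation

variable {Ω : Type*} {m m₁ m₂ m₀ : MeasurableSpace Ω} {μ : Measure Ω} [IsFiniteMeasure μ]

lemma condExp_condExp_sub_condExp_ae_eq_zero {f : Ω → ℝ} (hm₁ : m ≤ m₁) (hm₂ : m ≤ m₂)
    (hm₁₀ : m₁ ≤ m₀) (hm₂₀ : m₂ ≤ m₀) : μ[μ[f | m₁] - μ[f | m₂] | m] =ᵐ[μ] 0 :=
  calc μ[μ[f | m₁] - μ[f | m₂] | m]
      =ᵐ[μ] μ[μ[f | m₁] | m] - μ[μ[f | m₂] | m] :=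
        condExp_sub integrable_condExp integrable_condExp m
    _ =ᵐ[μ] μ[f | m] - μ[f | m] :=
        (condExp_condExp_of_le hm₁ hm₁₀).sub (condExp_condExp_of_le hm₂ hm₂₀)
    _ = 0 := sub_self _

end ConditionalExpectation

section Increments

variable {Ω : Type*} [mΩ : MeasurableSpace Ω] (μ : Measure Ω) {d : ℕ}
  (X : (Fin d → ℕ) → Ω → ℝ) (A : Finset (Fin d → ℕ)) {k : ℕ} {b b' : Fin d → ℕ}

lemma Zmart_zero : Zmart μ X A 0 b = X b - μ[X b | Fprec X 0 b] := if_pos rfl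

lemma Zmart_of_ne_zero (hk : k ≠ 0) :
    Zmart μ X A k b = ∑ t ∈ A.filter (fun t => ∀ i, b i ≤ t i ∧ t i < b i + 2 ^ k),
      (μ[X t | Fprec X k t] - μ[X t | Fprec X (k - 1) t]) := by
  funext ω
  simp only [Zmart, if_neg hk, Finset.sum_apply, Pi.sub_apply]

lemma measurable_Zmart (hb : proj k b = b) : Measurable[Fle X k b] (Zmart μ X A k b) := by
  rcases eq_or_ne k 0 with rfl | hk
  · rw [Zmart_zero]
    exact Measurable.sub (measurable_Fle_self X)
      (stronglyMeasurable_condExp.mono (Fprec_le_Fle X rfl)).measurable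
  rw [Zmart_of_ne_zero μ X A hk, Finset.sum_fn]
  refine Finset.measurable_sum _ fun t ht => ?_
  have htb : proj k t = proj k b := by rw [hb]; exact proj_eq_of_mem_cell hb (mem_filter.1 ht).2
  exact (stronglyMeasurable_condExp.mono (Fprec_le_Fle X htb)).measurable.sub
    (stronglyMeasurable_condExp.mono (Fprec_le_Fle X htb)).measurable

lemma integrable_Zmart (hXint : ∀ t, Integrable (X t) μ) : Integrable (Zmart μ X A k b) μ := by
  rcases eq_or_ne k 0 with rfl | hk
  · rw [Zmart_zero]
    exact (hXint b).sub integrable_condExp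
  · rw [Zmart_of_ne_zero μ X A hk]
    exact integrable_finsetSum' _ fun t _ => integrable_condExp.sub integrable_condExp

lemma condExp_Zmart_ae_eq_zero [IsFiniteMeasure μ] (hXmeas : ∀ t, Measurable (X t))
    (hXint : ∀ t, Integrable (X t) μ) (hb : proj k b = b) (h : dyadicLT (proj k b') b) :
    μ[Zmart μ X A k b | Fle X k b'] =ᵐ[μ] 0 := by
  rcases eq_or_ne k 0 with rfl | hk
  · have hX : X b = μ[X b | mΩ] :=
      (condExp_of_stronglyMeasurable le_rfl (hXmeas b).stronglyMeasurable (hXint b)).symm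
    rw [← hb] at h
    rw [Zmart_zero]
    nth_rw 1 [hX]
    exact condExp_condExp_sub_condExp_ae_eq_zero ((Fle_le_Fprec X le_rfl h).trans
      (Fprec_le X hXmeas)) (Fle_le_Fprec X le_rfl h) le_rfl (Fprec_le X hXmeas)
  rw [Zmart_of_ne_zero μ X A hk]
  refine (condExp_finsetSum (fun t _ => integrable_condExp.sub integrable_condExp) _).trans ?_
  refine (eventuallyEq_sum (g := fun _ => 0) fun t ht => ?_).trans (by rw [sum_const_zero])
  have htb : proj k t = b := proj_eq_of_mem_cell hb (mem_filter.1 ht).2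
  rw [← htb] at h
  exact condExp_condExp_sub_condExp_ae_eq_zero (Fle_le_Fprec X le_rfl h)
    (Fle_le_Fprec X (k.sub_le 1) h) (Fprec_le X hXmeas) (Fprec_le X hXmeas)

end Increments

/-- Lemma: for each fixed scale `k`, the family `(Z_{b,k}(A), 𝓕_k(b))_{b ∈ π_k(A)}`,
with `π_k(A)` ordered by the total order `≼`, is a martingale difference sequence. -/
theorem Zmart_martingale_difference
    {Ω : Type*} [mΩ : MeasurableSpace Ω] (μ : Measure Ω) [IsProbabilityMeasure μ]
    (d : ℕ) (X : (Fin d → ℕ) → Ω → ℝ)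
    (hXmeas : ∀ t, Measurable (X t))
    (hXint : ∀ t, Integrable (X t) μ)
    (A : Finset (Fin d → ℕ)) (k : ℕ) :
    (∀ b ∈ A.image (proj k),
        Measurable[Fle X k b] (Zmart μ X A k b) ∧ Integrable (Zmart μ X A k b) μ) ∧
    (∀ b ∈ A.image (proj k), ∀ b' ∈ A.image (proj k),
        dyadicLE b' b → Fle X k b' ≤ Fle X k b) ∧
    (∀ b ∈ A.image (proj k), ∀ b' ∈ A.image (proj k),
        dyadicLT b' b → μ[Zmart μ X A k b | Fle X k b'] =ᵐ[μ] 0) := by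
  have hfix : ∀ b ∈ A.image (proj k), proj k b = b := by
    simp only [mem_image]
    rintro _ ⟨a, -, rfl⟩
    exact proj_proj_of_le le_rfl a
  refine ⟨fun b hb => ⟨measurable_Zmart μ X A (hfix b hb), integrable_Zmart μ X A hXint⟩,
    fun b hb b' hb' h => Fle_mono X (by rwa [hfix b hb, hfix b' hb']),
    fun b hb b' hb' h => condExp_Zmart_ae_eq_zero μ X A hXmeas hXint (hfix b hb) ?_⟩
  rwa [hfix b' hb']
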